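/- arXiv:2312.07990 — 5 statements merged into one kernel-verified Lean document; each statement's English description precedes it below -/
import Mathlib

section
/- Suppose the step size is constant, α_k = α for all k, with 0 < α < 2/L. Then for every integer K ≥ 1, (1/K) ∑_{k=0}^{K−1} E[‖∇f(x_k)‖²] ≤ (2(f(x_0) − f⋆) / ((2 − Lα)α)) · (1/K) + (Lα / (2 − Lα)) · (σ²/b). -/
/-!
By the descent lemma for an `L`-smooth `f`, one step `x ↦ x - α g` gives
`f(x - α g) ≤ f x - α⟪∇f x, g⟫ + Lα²/2 ‖g‖²`. Since `E[g | 𝓕ₖ] = ∇f(xₖ)` and `∇f(xₖ)` is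
`𝓕ₖ`-measurable, the pull-out property gives `E⟪∇f(xₖ), g⟫ = E‖∇f(xₖ)‖²`, hence
`E‖g‖² = E‖∇f(xₖ)‖² + E‖g - ∇f(xₖ)‖² ≤ E‖∇f(xₖ)‖² + σ²/b`. So each step lowers `E f(xₖ)` by
at least `α(1 - Lα/2) E‖∇f(xₖ)‖² - Lα²σ²/(2b)`; telescoping over `k < K` and `f ≥ f⋆` give
the bound.
-/

open MeasureTheory ProbabilityTheory Filter RealInnerProductSpace

section

variable {Ω H : Type*} {m m₀ : MeasurableSpace Ω} {μ : Measure Ω}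
  [NormedAddCommGroup H] [InnerProductSpace ℝ H]

theorem MeasureTheory.MemLp.integrable_inner {f g : Ω → H} (hf : MemLp f 2 μ)
    (hg : MemLp g 2 μ) : Integrable (fun ω => ⟪f ω, g ω⟫) μ := by
  refine (L2.integrable_inner (𝕜 := ℝ) (hf.toLp f) (hg.toLp g)).congr ?_
  filter_upwards [hf.coeFn_toLp, hg.coeFn_toLp] with ω hfω hgω
  rw [hfω, hgω]

variable [CompleteSpace H]

theorem Differentiable.le_add_inner_gradient_add_of_lipschitzWith {f : H → ℝ}
    (hf : Differentiable ℝ f) {K : NNReal} (hK : LipschitzWith K (gradient f)) (x y : H) :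
    f y ≤ f x + ⟪gradient f x, y - x⟫ + K / 2 * ‖y - x‖ ^ 2 := by
  set d := y - x
  set φ : ℝ → ℝ := fun t => f (x + t • d) - t * ⟪gradient f x, d⟫ - K / 2 * t ^ 2 * ‖d‖ ^ 2
  have hφ : ∀ t,
      HasDerivAt φ (⟪gradient f (x + t • d) - gradient f x, d⟫ - K * t * ‖d‖ ^ 2) t := by
    intro t
    have hline : HasDerivAt (fun s : ℝ => x + s • d) d t := by
      simpa using ((hasDerivAt_id t).smul_const d).const_add x
    refine ((((hf _).hasFDerivAt.comp_hasDerivAt t hline).sub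
      ((hasDerivAt_id t).mul_const ⟪gradient f x, d⟫)).sub
      (((hasDerivAt_pow 2 t).const_mul (K / 2 : ℝ)).mul_const (‖d‖ ^ 2))).congr_deriv ?_
    simp only [inner_sub_left, inner_gradient_left]
    ring
  have hφ_nonpos : ∀ t ∈ interior (Set.Ici (0 : ℝ)),
      ⟪gradient f (x + t • d) - gradient f x, d⟫ - K * t * ‖d‖ ^ 2 ≤ 0 := by
    intro t ht
    rw [interior_Ici, Set.mem_Ioi] at ht
    have hlip : ‖gradient f (x + t • d) - gradient f x‖ ≤ K * (t * ‖d‖) := by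
      simpa [dist_eq_norm, norm_smul, abs_of_pos ht] using hK.dist_le_mul (x + t • d) x
    have hcs := real_inner_le_norm (gradient f (x + t • d) - gradient f x) d
    nlinarith [norm_nonneg d]
  have hanti : AntitoneOn φ (Set.Ici 0) :=
    antitoneOn_of_hasDerivWithinAt_nonpos (convex_Ici 0)
      (fun t _ => (hφ t).continuousAt.continuousWithinAt)
      (fun t _ => (hφ t).hasDerivWithinAt) hφ_nonpos
  have h01 : φ 1 ≤ φ 0 := hanti Set.self_mem_Ici (Set.mem_Ici.2 zero_le_one) zero_le_one
  have hy : x + d = y := add_sub_cancel x y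
  simp only [φ, one_smul, zero_smul, add_zero, hy] at h01
  linarith

theorem integral_inner_condExp (hm : m ≤ m₀) [SigmaFinite (μ.trim hm)] {y g : Ω → H}
    (hy : StronglyMeasurable[m] y) (hyg : Integrable (fun ω => ⟪y ω, g ω⟫) μ)
    (hg : Integrable g μ) :
    ∫ ω, ⟪y ω, (μ[g|m]) ω⟫ ∂μ = ∫ ω, ⟪y ω, g ω⟫ ∂μ := by
  rw [← integral_condExp hm (f := fun ω => ⟪y ω, g ω⟫)]
  exact integral_congr_ae (condExp_bilin_of_stronglyMeasurable_left (innerSL ℝ) hy hyg hg).symm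

theorem integral_inner_eq_integral_norm_sq_of_condExp_eq (hm : m ≤ m₀) [IsFiniteMeasure μ]
    {y g : Ω → H} (hy : StronglyMeasurable[m] y) (hy2 : MemLp y 2 μ) (hg : MemLp g 2 μ)
    (hgy : μ[g|m] =ᵐ[μ] y) :
    ∫ ω, ⟪y ω, g ω⟫ ∂μ = ∫ ω, ‖y ω‖ ^ 2 ∂μ := by
  rw [← integral_inner_condExp hm hy (hy2.integrable_inner hg) (hg.integrable one_le_two)]
  refine integral_congr_ae ?_
  filter_upwards [hgy] with ω hω
  rw [hω, real_inner_self_eq_norm_sq]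

theorem integral_le_of_ae_condExp_le [IsProbabilityMeasure μ] (hm : m ≤ m₀) {φ : Ω → ℝ} {c : ℝ}
    (h : ∀ᵐ ω ∂μ, μ[φ|m] ω ≤ c) : ∫ ω, φ ω ∂μ ≤ c := by
  rw [← integral_condExp hm]
  exact (integral_mono_ae integrable_condExp (integrable_const c) h).trans_eq (by simp)

theorem integral_sgd_step_le [IsProbabilityMeasure μ] (hm : m ≤ m₀) {f : H → ℝ}
    (hf : Differentiable ℝ f) {K : NNReal} (hK : LipschitzWith K (gradient f))
    {y g : Ω → H} (hy : StronglyMeasurable[m] y) (hg : MemLp g 2 μ)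
    (hg_mean : μ[g|m] =ᵐ[μ] fun ω => gradient f (y ω)) {q : ℝ}
    (hg_var : ∀ᵐ ω ∂μ, μ[fun ω => ‖g ω - gradient f (y ω)‖ ^ 2|m] ω ≤ q)
    (hgrad : Integrable (fun ω => ‖gradient f (y ω)‖ ^ 2) μ)
    (hfy : Integrable (fun ω => f (y ω)) μ) (a : ℝ)
    (hf_next : Integrable (fun ω => f (y ω - a • g ω)) μ) :
    ∫ ω, f (y ω - a • g ω) ∂μ ≤ ∫ ω, f (y ω) ∂μ
      - (a - K * a ^ 2 / 2) * ∫ ω, ‖gradient f (y ω)‖ ^ 2 ∂μ + K * a ^ 2 / 2 * q := by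
  set G := fun ω => gradient f (y ω)
  have hG_meas : StronglyMeasurable[m] G := hK.continuous.comp_stronglyMeasurable hy
  have hG : MemLp G 2 μ :=
    (memLp_two_iff_integrable_sq_norm (hG_meas.mono hm).aestronglyMeasurable).2 hgrad
  have hcross : ∫ ω, ⟪G ω, g ω⟫ ∂μ = ∫ ω, ‖G ω‖ ^ 2 ∂μ :=
    integral_inner_eq_integral_norm_sq_of_condExp_eq hm hG_meas hG hg hg_mean
  have hvar : ∫ ω, ‖g ω - G ω‖ ^ 2 ∂μ ≤ q := integral_le_of_ae_condExp_le hm hg_var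
  have hpt : ∀ ω, f (y ω - a • g ω) ≤ f (y ω) - (a - K * a ^ 2) * ⟪G ω, g ω⟫
      - K * a ^ 2 / 2 * ‖G ω‖ ^ 2 + K * a ^ 2 / 2 * ‖g ω - G ω‖ ^ 2 := by
    intro ω
    have hdesc := hf.le_add_inner_gradient_add_of_lipschitzWith hK (y ω) (y ω - a • g ω)
    rw [sub_sub_cancel_left, inner_neg_right, real_inner_smul_right, norm_neg, norm_smul,
      mul_pow, Real.norm_eq_abs, sq_abs] at hdesc
    have hpol := norm_sub_sq_real (g ω) (G ω)
    rw [real_inner_comm] at hpol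
    linear_combination hdesc - K * a ^ 2 / 2 * hpol
  have hint_cross := hG.integrable_inner hg
  have hint_var : Integrable (fun ω => ‖g ω - G ω‖ ^ 2) μ :=
    (hg.sub hG).integrable_norm_pow two_ne_zero
  calc ∫ ω, f (y ω - a • g ω) ∂μ
      ≤ ∫ ω, (f (y ω) - (a - K * a ^ 2) * ⟪G ω, g ω⟫
      - K * a ^ 2 / 2 * ‖G ω‖ ^ 2 + K * a ^ 2 / 2 * ‖g ω - G ω‖ ^ 2) ∂μ :=
        integral_mono hf_next (((hfy.sub (hint_cross.const_mul _)).sub (hgrad.const_mul _)).add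
          (hint_var.const_mul _)) hpt
    _ = ∫ ω, f (y ω) ∂μ - (a - K * a ^ 2 / 2) * ∫ ω, ‖G ω‖ ^ 2 ∂μ
        + K * a ^ 2 / 2 * ∫ ω, ‖g ω - G ω‖ ^ 2 ∂μ := by
      rw [integral_add _ (hint_var.const_mul _), integral_sub _ (hgrad.const_mul _),
        integral_sub hfy (hint_cross.const_mul _), integral_const_mul, integral_const_mul,
        integral_const_mul, hcross]
      · ring
      · exact hfy.sub (hint_cross.const_mul _)
      · exact (hfy.sub (hint_cross.const_mul _)).sub (hgrad.const_mul _)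
    _ ≤ _ := by gcongr

end

theorem mul_sum_range_le_of_le_sub_add {F I : ℕ → ℝ} {c D : ℝ}
    (h : ∀ k, F (k + 1) ≤ F k - c * I k + D) (K : ℕ) :
    c * ∑ k ∈ Finset.range K, I k ≤ F 0 - F K + K * D := by
  rw [← Finset.sum_range_sub' F, Finset.mul_sum]
  calc ∑ k ∈ Finset.range K, c * I k ≤ ∑ k ∈ Finset.range K, (F k - F (k + 1) + D) :=
        Finset.sum_le_sum fun k _ => by linarith [h k]
    _ = _ := by simp [Finset.sum_add_distrib]

theorem rsgd_constant_step_convergence_general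
    {Ω : Type*} [MeasureSpace Ω] [IsProbabilityMeasure (ℙ : Measure Ω)]
    {H : Type*} [NormedAddCommGroup H] [InnerProductSpace ℝ H] [CompleteSpace H]
    (𝓕 : Filtration ℕ (inferInstance : MeasurableSpace Ω))
    (f : H → ℝ) (hf : ContDiff ℝ 1 f)
    (L : ℝ) (hL : 0 < L) (hLip : LipschitzWith L.toNNReal (gradient f))
    (fstar : ℝ) (hbdd : ∀ y, fstar ≤ f y)
    (x₀ : H) (α : ℕ → ℝ)
    (b : ℕ) (σ2 : ℝ)
    (g : ℕ → Ω → H)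
    (hg_L2 : ∀ k, MemLp (g k) 2 ℙ)
    (x : ℕ → Ω → H)
    (hx0 : x 0 = fun _ => x₀)
    (hxrec : ∀ k, x (k + 1) = fun ω => x k ω - α k • g k ω)
    (hx_meas : ∀ k, StronglyMeasurable[𝓕 k] (x k))
    (hg_mean : ∀ k, condExp (𝓕 k) ℙ (g k) =ᵐ[ℙ] fun ω => gradient f (x k ω))
    (hg_var : ∀ k, ∀ᵐ ω ∂ℙ,
      condExp (𝓕 k) ℙ (fun ω' => ‖g k ω' - gradient f (x k ω')‖ ^ 2) ω ≤ σ2 / b)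
    (hgrad_int : ∀ k, Integrable (fun ω => ‖gradient f (x k ω)‖ ^ 2) ℙ)
    (hf_int : ∀ k, Integrable (fun ω => f (x k ω)) ℙ)
    (a : ℝ) (ha : 0 < a) (ha' : a < 2 / L) (hconst : ∀ k, α k = a) :
    ∀ K : ℕ, 1 ≤ K →
      (1 / (K : ℝ)) * ∑ k ∈ Finset.range K, ∫ ω, ‖gradient f (x k ω)‖ ^ 2 ∂ℙ
        ≤ 2 * (f x₀ - fstar) / ((2 - L * a) * a) * (1 / (K : ℝ))
          + L * a / (2 - L * a) * (σ2 / b) := by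
  intro K hK
  have hLa : 0 < 2 - L * a := by linarith [(lt_div_iff₀ hL).mp ha']
  have hstep : ∀ k, ∫ ω, f (x (k + 1) ω) ∂ℙ ≤ (∫ ω, f (x k ω) ∂ℙ)
      - (a - L * a ^ 2 / 2) * (∫ ω, ‖gradient f (x k ω)‖ ^ 2 ∂ℙ) + L * a ^ 2 / 2 * (σ2 / b) := by
    intro k
    have hx_next : x (k + 1) = fun ω => x k ω - a • g k ω := by rw [hxrec, hconst]
    rw [← Real.coe_toNNReal L hL.le, hx_next]
    exact integral_sgd_step_le (𝓕.le k) (hf.differentiable one_ne_zero) hLip (hx_meas k)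
      (hg_L2 k) (hg_mean k) (hg_var k) (hgrad_int k) (hf_int k) a
      (by simpa only [hx_next] using hf_int (k + 1))
  have hsum := mul_sum_range_le_of_le_sub_add (F := fun k => ∫ ω, f (x k ω) ∂ℙ)
    (I := fun k => ∫ ω, ‖gradient f (x k ω)‖ ^ 2 ∂ℙ) hstep K
  have hf₀ : ∫ ω, f (x 0 ω) ∂ℙ = f x₀ := by simp [hx0]
  have hfK : fstar ≤ ∫ ω, f (x K ω) ∂ℙ := by
    simpa using integral_mono (integrable_const fstar) (hf_int K) fun ω => hbdd (x K ω)
  calc (1 / (K : ℝ)) * ∑ k ∈ Finset.range K, ∫ ω, ‖gradient f (x k ω)‖ ^ 2 ∂ℙ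
      = 1 / K * (2 / ((2 - L * a) * a))
        * ((a - L * a ^ 2 / 2) * ∑ k ∈ Finset.range K, ∫ ω, ‖gradient f (x k ω)‖ ^ 2 ∂ℙ) := by
        field_simp
    _ ≤ 1 / K * (2 / ((2 - L * a) * a)) * (f x₀ - fstar + K * (L * a ^ 2 / 2 * (σ2 / b))) := by
        gcongr
        linarith
    _ = _ := by field_simp

/-- Theorem 1 of the paper in the Euclidean/Hilbert setting: RSGD with a constant
step size `α ∈ (0, 2/L)` under `L`-smoothness satisfies, for every `K ≥ 1`,
`(1/K) ∑_{k<K} E[‖∇f(x_k)‖²] ≤ 2(f(x₀) − f⋆)/((2 − Lα)α) · (1/K) + Lα/(2 − Lα) · σ²/b`. -/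
theorem rsgd_constant_step_convergence
    {Ω : Type*} [MeasureSpace Ω] [IsProbabilityMeasure (ℙ : Measure Ω)]
    {H : Type*} [NormedAddCommGroup H] [InnerProductSpace ℝ H] [CompleteSpace H]
    (𝓕 : Filtration ℕ (inferInstance : MeasurableSpace Ω))
    (f : H → ℝ) (hf : ContDiff ℝ 1 f)
    (L : ℝ) (hL : 0 < L) (hLip : LipschitzWith L.toNNReal (gradient f))
    (fstar : ℝ) (hbdd : ∀ y, fstar ≤ f y)
    (x₀ : H) (α : ℕ → ℝ) (hα : ∀ k, 0 < α k)
    (b : ℕ) (hb : 1 ≤ b) (σ2 : ℝ) (hσ2 : 0 ≤ σ2)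
    (g : ℕ → Ω → H)
    (hg_meas : ∀ k, StronglyMeasurable[𝓕 (k + 1)] (g k))
    (hg_L2 : ∀ k, MemLp (g k) 2 ℙ)
    (x : ℕ → Ω → H)
    (hx0 : x 0 = fun _ => x₀)
    (hxrec : ∀ k, x (k + 1) = fun ω => x k ω - α k • g k ω)
    (hx_meas : ∀ k, StronglyMeasurable[𝓕 k] (x k))
    (hg_mean : ∀ k, condExp (𝓕 k) ℙ (g k) =ᵐ[ℙ] fun ω => gradient f (x k ω))
    (hg_var : ∀ k, ∀ᵐ ω ∂ℙ,
      condExp (𝓕 k) ℙ (fun ω' => ‖g k ω' - gradient f (x k ω')‖ ^ 2) ω ≤ σ2 / b)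
    (hx_int : ∀ k, Integrable (fun ω => ‖x k ω‖ ^ 2) ℙ)
    (hgrad_int : ∀ k, Integrable (fun ω => ‖gradient f (x k ω)‖ ^ 2) ℙ)
    (hf_int : ∀ k, Integrable (fun ω => f (x k ω)) ℙ)
    (a : ℝ) (ha : 0 < a) (ha' : a < 2 / L) (hconst : ∀ k, α k = a) :
    ∀ K : ℕ, 1 ≤ K →
      (1 / (K : ℝ)) * ∑ k ∈ Finset.range K, ∫ ω, ‖gradient f (x k ω)‖ ^ 2 ∂ℙ
        ≤ 2 * (f x₀ - fstar) / ((2 - L * a) * a) * (1 / (K : ℝ))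
          + L * a / (2 - L * a) * (σ2 / b) :=
  rsgd_constant_step_convergence_general 𝓕 f hf L hL hLip fstar hbdd x₀ α b σ2 g hg_L2 x hx0 hxrec
    hx_meas hg_mean hg_var hgrad_int hf_int a ha ha' hconst
end

section
/- For every integer K ≥ 1 and every x ∈ H, ∑_{k=0}^{K−1} α_k V_k(x) ≤ (1/2) ∑_{k=0}^{K−1} α_k² (σ²/b + E[‖∇f(x_k)‖²]) + (1/2)(E[‖x_0 − x‖²] − E[‖x_K − x‖²]). -/
/-!
Expanding `‖x_{k+1} - x‖² = ‖x_k - x‖² - 2α_k⟪g_k, x_k - x⟫ + α_k²‖g_k‖²` and taking expectations,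
the tower property replaces `g_k` by `∇f(x_k)` in the cross term, since `x_k - x` is
`𝓕_k`-measurable, and the same argument, applied to `∇f(x_k)` (which is `𝓕_k`-measurable as a
version of `E[g_k | 𝓕_k]`), splits the second moment as
`E‖g_k‖² = E‖g_k - ∇f(x_k)‖² + E‖∇f(x_k)‖² ≤ σ²/b + E‖∇f(x_k)‖²`.
This bounds each `α_k V_k(x)`, and summing over `k < K` telescopes the distance terms.
-/

open MeasureTheory ProbabilityTheory Filter RealInnerProductSpace

namespace MeasureTheory

variable {Ω H : Type*} {m m0 : MeasurableSpace Ω} {μ : Measure Ω}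
  [NormedAddCommGroup H] [InnerProductSpace ℝ H]

lemma MemLp.integrable_inner_s6 {F G : Ω → H} (hF : MemLp F 2 μ) (hG : MemLp G 2 μ) :
    Integrable (fun ω => ⟪F ω, G ω⟫) μ :=
  memLp_one_iff_integrable.1 <| hF.of_bilin (fun u v => ⟪u, v⟫) 1 hG (hF.1.inner hG.1)
    (ae_of_all _ fun _ => by simpa using nnnorm_inner_le_nnnorm (𝕜 := ℝ) _ _)

omit [InnerProductSpace ℝ H] in
lemma MemLp.integrable_norm_sq {F : Ω → H} (hF : MemLp F 2 μ) :
    Integrable (fun ω => ‖F ω‖ ^ 2) μ :=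
  (memLp_two_iff_integrable_sq_norm hF.1).1 hF

lemma integral_norm_sub_smul_sq {X G : Ω → H} (hX : MemLp X 2 μ) (hG : MemLp G 2 μ) (a : ℝ) :
    ∫ ω, ‖X ω - a • G ω‖ ^ 2 ∂μ
      = ∫ ω, ‖X ω‖ ^ 2 ∂μ - 2 * a * ∫ ω, ⟪G ω, X ω⟫ ∂μ + a ^ 2 * ∫ ω, ‖G ω‖ ^ 2 ∂μ := by
  have hpt : ∀ ω, ‖X ω - a • G ω‖ ^ 2
      = ‖X ω‖ ^ 2 - 2 * a * ⟪G ω, X ω⟫ + a ^ 2 * ‖G ω‖ ^ 2 := fun ω => by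
    rw [norm_sub_sq_real, real_inner_smul_right, norm_smul, mul_pow, Real.norm_eq_abs, sq_abs,
      real_inner_comm]
    ring
  have hGX : Integrable (fun ω => 2 * a * ⟪G ω, X ω⟫) μ := (hG.integrable_inner_s6 hX).const_mul _
  have hXGX : Integrable (fun ω => ‖X ω‖ ^ 2 - 2 * a * ⟪G ω, X ω⟫) μ :=
    hX.integrable_norm_sq.sub hGX
  simp only [hpt]
  rw [integral_add hXGX (hG.integrable_norm_sq.const_mul _),
    integral_sub hX.integrable_norm_sq hGX, integral_const_mul, integral_const_mul]

variable [CompleteSpace H]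

lemma integral_inner_eq_of_condExp_ae_eq (hm : m ≤ m0) [SigmaFinite (μ.trim hm)]
    {G M Y : Ω → H} (hG : Integrable G μ) (hGY : Integrable (fun ω => ⟪G ω, Y ω⟫) μ)
    (hY : AEStronglyMeasurable[m] Y μ) (hGM : μ[G | m] =ᵐ[μ] M) :
    ∫ ω, ⟪G ω, Y ω⟫ ∂μ = ∫ ω, ⟪M ω, Y ω⟫ ∂μ := by
  have hpull : μ[fun ω => ⟪G ω, Y ω⟫ | m] =ᵐ[μ] fun ω => ⟪μ[G | m] ω, Y ω⟫ :=
    condExp_bilin_of_aestronglyMeasurable_right (innerSL ℝ) hY hGY hG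
  calc ∫ ω, ⟪G ω, Y ω⟫ ∂μ = ∫ ω, μ[fun ω => ⟪G ω, Y ω⟫ | m] ω ∂μ := (integral_condExp hm).symm
    _ = ∫ ω, ⟪M ω, Y ω⟫ ∂μ := integral_congr_ae <| by
      filter_upwards [hpull, hGM] with ω h1 h2
      rw [h1, h2]

lemma integral_le_of_condExp_le [IsProbabilityMeasure μ] (hm : m ≤ m0) {f : Ω → ℝ} {c : ℝ}
    (hfc : ∀ᵐ ω ∂μ, μ[f | m] ω ≤ c) : ∫ ω, f ω ∂μ ≤ c := by
  rw [← integral_condExp hm]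
  simpa using integral_mono_ae integrable_condExp (integrable_const c) hfc

lemma integral_norm_sq_eq_of_condExp_ae_eq [IsFiniteMeasure μ] (hm : m ≤ m0) {G M : Ω → H}
    (hG : MemLp G 2 μ) (hGM : μ[G | m] =ᵐ[μ] M) :
    ∫ ω, ‖G ω‖ ^ 2 ∂μ = ∫ ω, ‖G ω - M ω‖ ^ 2 ∂μ + ∫ ω, ‖M ω‖ ^ 2 ∂μ := by
  have hM : MemLp M 2 μ := (hG.condExp one_le_two).ae_eq hGM
  have hMm : AEStronglyMeasurable[m] M μ :=
    stronglyMeasurable_condExp.aestronglyMeasurable.congr hGM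
  have hcross : ∫ ω, ⟪G ω - M ω, M ω⟫ ∂μ = 0 := by
    simp only [inner_sub_left]
    rw [integral_sub (hG.integrable_inner_s6 hM) (hM.integrable_inner_s6 hM),
      integral_inner_eq_of_condExp_ae_eq hm (hG.integrable one_le_two) (hG.integrable_inner_s6 hM) hMm
        hGM, sub_self]
  have hpt : ∀ ω, ‖G ω‖ ^ 2 = ‖G ω - M ω‖ ^ 2 + 2 * ⟪G ω - M ω, M ω⟫ + ‖M ω‖ ^ 2 := fun ω => by
    rw [← norm_add_sq_real, sub_add_cancel]
  have hD : MemLp (fun ω => G ω - M ω) 2 μ := hG.sub hM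
  have hDM : Integrable (fun ω => 2 * ⟪G ω - M ω, M ω⟫) μ := (hD.integrable_inner_s6 hM).const_mul 2
  have hDDM : Integrable (fun ω => ‖G ω - M ω‖ ^ 2 + 2 * ⟪G ω - M ω, M ω⟫) μ :=
    hD.integrable_norm_sq.add hDM
  simp only [hpt]
  rw [integral_add hDDM hM.integrable_norm_sq, integral_add hD.integrable_norm_sq hDM,
    integral_const_mul, hcross]
  ring

lemma integral_norm_sub_smul_sq_le [IsProbabilityMeasure μ] (hm : m ≤ m0) {X G M : Ω → H}
    {σ2 : ℝ} (a : ℝ) (hX : AEStronglyMeasurable[m] X μ) (hXL : MemLp X 2 μ) (hG : MemLp G 2 μ)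
    (hGM : μ[G | m] =ᵐ[μ] M) (hvar : ∀ᵐ ω ∂μ, μ[fun ω => ‖G ω - M ω‖ ^ 2 | m] ω ≤ σ2) :
    ∫ ω, ‖X ω - a • G ω‖ ^ 2 ∂μ
      ≤ ∫ ω, ‖X ω‖ ^ 2 ∂μ - 2 * a * ∫ ω, ⟪M ω, X ω⟫ ∂μ
        + a ^ 2 * (σ2 + ∫ ω, ‖M ω‖ ^ 2 ∂μ) := by
  rw [integral_norm_sub_smul_sq hXL hG,
    integral_inner_eq_of_condExp_ae_eq hm (hG.integrable one_le_two) (hG.integrable_inner_s6 hXL) hX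
      hGM,
    integral_norm_sq_eq_of_condExp_ae_eq hm hG hGM]
  gcongr
  exact integral_le_of_condExp_le hm hvar

end MeasureTheory

theorem rsgd_weighted_vi_sum_bound_general
    {Ω : Type*} [MeasureSpace Ω] [IsProbabilityMeasure (ℙ : Measure Ω)]
    {H : Type*} [NormedAddCommGroup H] [InnerProductSpace ℝ H] [CompleteSpace H]
    (𝓕 : Filtration ℕ (inferInstance : MeasurableSpace Ω))
    (f : H → ℝ)
    (α : ℕ → ℝ)
    (b : ℕ) (σ2 : ℝ)
    (g : ℕ → Ω → H)
    (hg_L2 : ∀ k, MemLp (g k) 2 ℙ)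
    (x : ℕ → Ω → H)
    (hxrec : ∀ k, x (k + 1) = fun ω => x k ω - α k • g k ω)
    (hx_meas : ∀ k, StronglyMeasurable[𝓕 k] (x k))
    (hg_mean : ∀ k, condExp (𝓕 k) ℙ (g k) =ᵐ[ℙ] fun ω => gradient f (x k ω))
    (hg_var : ∀ k, ∀ᵐ ω ∂ℙ,
      condExp (𝓕 k) ℙ (fun ω' => ‖g k ω' - gradient f (x k ω')‖ ^ 2) ω ≤ σ2 / b)
    (hx_int : ∀ k, Integrable (fun ω => ‖x k ω‖ ^ 2) ℙ)
    : ∀ K : ℕ, 1 ≤ K → ∀ x' : H,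
      ∑ k ∈ Finset.range K,
          α k * ∫ ω, ⟪gradient f (x k ω), x k ω - x'⟫ ∂ℙ
        ≤ (1 / 2) * ∑ k ∈ Finset.range K,
              α k ^ 2 * (σ2 / b + ∫ ω, ‖gradient f (x k ω)‖ ^ 2 ∂ℙ)
          + (1 / 2) * ((∫ ω, ‖x 0 ω - x'‖ ^ 2 ∂ℙ) - ∫ ω, ‖x K ω - x'‖ ^ 2 ∂ℙ) := by
  intro K _ x'
  have step : ∀ k, α k * ∫ ω, ⟪gradient f (x k ω), x k ω - x'⟫ ∂ℙ
      ≤ 1 / 2 * (α k ^ 2 * (σ2 / b + ∫ ω, ‖gradient f (x k ω)‖ ^ 2 ∂ℙ))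
        + 1 / 2 * ((∫ ω, ‖x k ω - x'‖ ^ 2 ∂ℙ) - ∫ ω, ‖x (k + 1) ω - x'‖ ^ 2 ∂ℙ) := by
    intro k
    have hX : StronglyMeasurable[𝓕 k] fun ω => x k ω - x' :=
      (hx_meas k).sub stronglyMeasurable_const
    have hXL : MemLp (fun ω => x k ω - x') 2 ℙ :=
      ((memLp_two_iff_integrable_sq_norm ((hx_meas k).mono (𝓕.le k)).aestronglyMeasurable).2
        (hx_int k)).sub (memLp_const x')
    have hnext : ∀ ω, x (k + 1) ω - x' = x k ω - x' - α k • g k ω := fun ω => by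
      rw [hxrec, sub_right_comm]
    have hdist := integral_norm_sub_smul_sq_le (𝓕.le k) (α k) hX.aestronglyMeasurable hXL
      (hg_L2 k) (hg_mean k) (hg_var k)
    simp only [← hnext] at hdist
    linarith
  have hsum := Finset.sum_le_sum fun k (_ : k ∈ Finset.range K) => step k
  rwa [Finset.sum_add_distrib, ← Finset.mul_sum, ← Finset.mul_sum,
    Finset.sum_range_sub' (fun k => ∫ ω, ‖x k ω - x'‖ ^ 2 ∂ℙ)] at hsum

/-- Lemma 4 of the paper in the Euclidean/Hilbert setting (curvature bound `κ = 0`,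
so `ζ(κ,c) = 1`): for every `K ≥ 1` and `x ∈ H`, with `V_k(x) = E[⟪∇f(x_k), x_k − x⟫]`,
`∑_{k<K} α_k V_k(x) ≤ (1/2) ∑_{k<K} α_k²(σ²/b + E[‖∇f(x_k)‖²])
  + (1/2)(E[‖x_0 − x‖²] − E[‖x_K − x‖²])`. -/
theorem rsgd_weighted_vi_sum_bound
    {Ω : Type*} [MeasureSpace Ω] [IsProbabilityMeasure (ℙ : Measure Ω)]
    {H : Type*} [NormedAddCommGroup H] [InnerProductSpace ℝ H] [CompleteSpace H]
    (𝓕 : Filtration ℕ (inferInstance : MeasurableSpace Ω))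
    (f : H → ℝ) (hf : ContDiff ℝ 1 f)
    (x₀ : H) (α : ℕ → ℝ) (hα : ∀ k, 0 < α k)
    (b : ℕ) (hb : 1 ≤ b) (σ2 : ℝ) (hσ2 : 0 ≤ σ2)
    (g : ℕ → Ω → H)
    (hg_meas : ∀ k, StronglyMeasurable[𝓕 (k + 1)] (g k))
    (hg_L2 : ∀ k, MemLp (g k) 2 ℙ)
    (x : ℕ → Ω → H)
    (hx0 : x 0 = fun _ => x₀)
    (hxrec : ∀ k, x (k + 1) = fun ω => x k ω - α k • g k ω)
    (hx_meas : ∀ k, StronglyMeasurable[𝓕 k] (x k))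
    (hg_mean : ∀ k, condExp (𝓕 k) ℙ (g k) =ᵐ[ℙ] fun ω => gradient f (x k ω))
    (hg_var : ∀ k, ∀ᵐ ω ∂ℙ,
      condExp (𝓕 k) ℙ (fun ω' => ‖g k ω' - gradient f (x k ω')‖ ^ 2) ω ≤ σ2 / b)
    (hx_int : ∀ k, Integrable (fun ω => ‖x k ω‖ ^ 2) ℙ)
    (hgrad_int : ∀ k, Integrable (fun ω => ‖gradient f (x k ω)‖ ^ 2) ℙ)
    : ∀ K : ℕ, 1 ≤ K → ∀ x' : H,
      ∑ k ∈ Finset.range K,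
          α k * ∫ ω, ⟪gradient f (x k ω), x k ω - x'⟫ ∂ℙ
        ≤ (1 / 2) * ∑ k ∈ Finset.range K,
              α k ^ 2 * (σ2 / b + ∫ ω, ‖gradient f (x k ω)‖ ^ 2 ∂ℙ)
          + (1 / 2) * ((∫ ω, ‖x 0 ω - x'‖ ^ 2 ∂ℙ) - ∫ ω, ‖x K ω - x'‖ ^ 2 ∂ℙ) :=
  rsgd_weighted_vi_sum_bound_general 𝓕 f α b σ2 g hg_L2 x hxrec hx_meas hg_mean hg_var hx_int
end

section
/- Suppose the step size is constant, α_k = α > 0 for all k, and that there is G > 0 with E[‖∇f(x_k)‖²] ≤ G² for all k. Then for every x ∈ H, liminf_{k→∞} V_k(x) ≤ (σ²/b + G²) · α/2. -/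
open MeasureTheory ProbabilityTheory Filter RealInnerProductSpace

/-!
Expanding `‖x_{k+1} - x‖² = ‖x_k - x‖² - 2α ⟪g_k, x_k - x⟫ + α² ‖g_k‖²` and taking expectations,
the tower property turns the cross term into `-2α V_k(x)`, since `x_k - x` is `𝓕_k`-measurable,
while the bias–variance split `E‖g_k‖² = E‖g_k - ∇f(x_k)‖² + E‖∇f(x_k)‖² ≤ σ²/b + G²` bounds the
last term. Hence `D_k = E‖x_k - x‖² ≥ 0` drops by at least `2α (V_k(x) - (σ²/b + G²) α/2)` at
every step, which is impossible if `V_k(x)` stayed above that bound by a fixed margin.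
-/

theorem Real.liminf_le_of_lyapunov_descent {D V : ℕ → ℝ} {ε B : ℝ} (hε : 0 < ε) (hB : 0 ≤ B)
    (hD : ∀ k, 0 ≤ D k) (hstep : ∀ k, D (k + 1) ≤ D k - ε * (V k - B)) :
    liminf V atTop ≤ B := by
  rw [liminf_eq]
  -- `hB` handles the junk value: the `liminf` of a real sequence unbounded below is `0`.
  refine Real.sSup_le (fun r hr => ?_) hB
  obtain ⟨N, hN⟩ := eventually_atTop.mp hr
  by_contra! hBr
  have hdesc : ∀ n : ℕ, D (N + n) ≤ D N - n * (ε * (r - B)) := by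
    intro n
    induction n with
    | zero => simp
    | succ n ih =>
      have hVr : ε * (r - B) ≤ ε * (V (N + n) - B) := by
        gcongr
        exact hN (N + n) (Nat.le_add_right N n)
      show D (N + n + 1) ≤ _
      push_cast
      linarith [hstep (N + n)]
  obtain ⟨n, hn⟩ := exists_nat_gt (D N / (ε * (r - B)))
  rw [div_lt_iff₀ (mul_pos hε (sub_pos.2 hBr))] at hn
  linarith [hD (N + n), hdesc n]

namespace MeasureTheory

variable {Ω E : Type*} {m m₀ : MeasurableSpace Ω} {μ : Measure Ω}
  [NormedAddCommGroup E] [InnerProductSpace ℝ E]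

theorem MemLp.integrable_inner_s7 {f g : Ω → E} (hf : MemLp f 2 μ) (hg : MemLp g 2 μ) :
    Integrable (fun ω => ⟪f ω, g ω⟫) μ :=
  memLp_one_iff_integrable.1 <| (innerSL ℝ).memLp_of_bilin 1 hf hg

variable [CompleteSpace E]

theorem integral_inner_condExp_left (hm : m ≤ m₀) [SigmaFinite (μ.trim hm)] {f g : Ω → E}
    (hg : AEStronglyMeasurable[m] g μ) (hf : Integrable f μ)
    (hfg : Integrable (fun ω => ⟪f ω, g ω⟫) μ) :
    ∫ ω, ⟪μ[f | m] ω, g ω⟫ ∂μ = ∫ ω, ⟪f ω, g ω⟫ ∂μ := by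
  have hpull := condExp_bilin_of_aestronglyMeasurable_right (innerSL ℝ) hg hfg hf
  rw [← integral_condExp hm (f := fun ω => ⟪f ω, g ω⟫)]
  exact integral_congr_ae hpull.symm

theorem integral_norm_sub_smul_sq_s7 [IsFiniteMeasure μ] (hm : m ≤ m₀) {y f : Ω → E}
    (hy : MemLp y 2 μ) (hym : AEStronglyMeasurable[m] y μ) (hf : MemLp f 2 μ) (a : ℝ) :
    ∫ ω, ‖y ω - a • f ω‖ ^ 2 ∂μ
      = ∫ ω, ‖y ω‖ ^ 2 ∂μ - 2 * a * ∫ ω, ⟪μ[f | m] ω, y ω⟫ ∂μ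
        + a ^ 2 * ∫ ω, ‖f ω‖ ^ 2 ∂μ := by
  have hfy := hf.integrable_inner_s7 hy
  rw [integral_inner_condExp_left hm hym (hf.integrable one_le_two) hfy]
  have hpt : ∀ ω, ‖y ω - a • f ω‖ ^ 2 = ‖y ω‖ ^ 2 - 2 * a * ⟪f ω, y ω⟫ + a ^ 2 * ‖f ω‖ ^ 2 := by
    intro ω
    rw [norm_sub_sq_real, inner_smul_right, real_inner_comm, norm_smul, mul_pow, Real.norm_eq_abs,
      sq_abs]
    ring
  have hy2 := hy.integrable_norm_pow two_ne_zero
  have hcross : Integrable (fun ω => 2 * a * ⟪f ω, y ω⟫) μ := hfy.const_mul _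
  have hdiff : Integrable (fun ω => ‖y ω‖ ^ 2 - 2 * a * ⟪f ω, y ω⟫) μ := hy2.sub hcross
  simp_rw [hpt]
  rw [integral_add hdiff ((hf.integrable_norm_pow two_ne_zero).const_mul _),
    integral_sub hy2 hcross, integral_const_mul, integral_const_mul]

theorem integral_norm_sq_eq_add_of_condExp_ae_eq [IsFiniteMeasure μ] (hm : m ≤ m₀) {f g : Ω → E}
    (hf : MemLp f 2 μ) (hfg : μ[f | m] =ᵐ[μ] g) :
    ∫ ω, ‖f ω‖ ^ 2 ∂μ = ∫ ω, ‖f ω - g ω‖ ^ 2 ∂μ + ∫ ω, ‖g ω‖ ^ 2 ∂μ := by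
  have hgm : AEStronglyMeasurable[m] g μ :=
    stronglyMeasurable_condExp.aestronglyMeasurable.congr hfg
  have hg : MemLp g 2 μ := (hf.condExp one_le_two).ae_eq hfg
  have h := integral_norm_sub_smul_sq_s7 hm hg hgm hf 1
  have hgg : ∫ ω, ⟪μ[f | m] ω, g ω⟫ ∂μ = ∫ ω, ‖g ω‖ ^ 2 ∂μ := by
    refine integral_congr_ae ?_
    filter_upwards [hfg] with ω hω
    rw [hω, real_inner_self_eq_norm_sq]
  simp only [one_smul, hgg, one_pow, one_mul] at h
  simp_rw [norm_sub_rev (f _)]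
  linarith

theorem integral_norm_sq_le_of_condExp_ae_eq [IsProbabilityMeasure μ] (hm : m ≤ m₀)
    {f g : Ω → E} (hf : MemLp f 2 μ) (hfg : μ[f | m] =ᵐ[μ] g) {s : ℝ}
    (hvar : ∀ᵐ ω ∂μ, μ[fun ω' => ‖f ω' - g ω'‖ ^ 2 | m] ω ≤ s) :
    ∫ ω, ‖f ω‖ ^ 2 ∂μ ≤ s + ∫ ω, ‖g ω‖ ^ 2 ∂μ := by
  rw [integral_norm_sq_eq_add_of_condExp_ae_eq hm hf hfg]
  gcongr
  calc ∫ ω, ‖f ω - g ω‖ ^ 2 ∂μ = ∫ ω, μ[fun ω' => ‖f ω' - g ω'‖ ^ 2 | m] ω ∂μ :=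
        (integral_condExp hm).symm
    _ ≤ ∫ _, s ∂μ := integral_mono_ae integrable_condExp (integrable_const s) hvar
    _ = s := by simp

end MeasureTheory

theorem rsgd_constant_step_vi_liminf_general
    {Ω : Type*} [MeasureSpace Ω] [IsProbabilityMeasure (ℙ : Measure Ω)]
    {H : Type*} [NormedAddCommGroup H] [InnerProductSpace ℝ H] [CompleteSpace H]
    (𝓕 : Filtration ℕ (inferInstance : MeasurableSpace Ω))
    (f : H → ℝ)
    (α : ℕ → ℝ)
    (b : ℕ) (σ2 : ℝ)
    (g : ℕ → Ω → H)
    (hg_L2 : ∀ k, MemLp (g k) 2 ℙ)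
    (x : ℕ → Ω → H)
    (hxrec : ∀ k, x (k + 1) = fun ω => x k ω - α k • g k ω)
    (hx_meas : ∀ k, StronglyMeasurable[𝓕 k] (x k))
    (hg_mean : ∀ k, condExp (𝓕 k) ℙ (g k) =ᵐ[ℙ] fun ω => gradient f (x k ω))
    (hg_var : ∀ k, ∀ᵐ ω ∂ℙ,
      condExp (𝓕 k) ℙ (fun ω' => ‖g k ω' - gradient f (x k ω')‖ ^ 2) ω ≤ σ2 / b)
    (hx_int : ∀ k, Integrable (fun ω => ‖x k ω‖ ^ 2) ℙ)
    (a : ℝ) (ha : 0 < a) (hconst : ∀ k, α k = a)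
    (G : ℝ)
    (hGbound : ∀ k, (∫ ω, ‖gradient f (x k ω)‖ ^ 2 ∂ℙ) ≤ G ^ 2) :
    ∀ x' : H,
      liminf (fun k => ∫ ω, ⟪gradient f (x k ω), x k ω - x'⟫ ∂ℙ) atTop
        ≤ (σ2 / b + G ^ 2) * a / 2 := by
  intro x'
  have hsecond_moment : ∀ k, ∫ ω, ‖g k ω‖ ^ 2 ∂ℙ ≤ σ2 / b + G ^ 2 := fun k =>
    (integral_norm_sq_le_of_condExp_ae_eq (𝓕.le k) (hg_L2 k) (hg_mean k) (hg_var k)).trans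
      (add_le_add_right (hGbound k) _)
  refine Real.liminf_le_of_lyapunov_descent (D := fun k => ∫ ω, ‖x k ω - x'‖ ^ 2 ∂ℙ)
    (mul_pos two_pos ha) ?_ (fun k => integral_nonneg fun ω => sq_nonneg _) fun k => ?_
  · have hc := (integral_nonneg fun ω => sq_nonneg ‖g 0 ω‖).trans (hsecond_moment 0)
    exact div_nonneg (mul_nonneg hc ha.le) zero_le_two
  have hdist_L2 : MemLp (fun ω => x k ω - x') 2 ℙ :=
    ((memLp_two_iff_integrable_sq_norm ((hx_meas k).mono (𝓕.le k)).aestronglyMeasurable).2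
      (hx_int k)).sub (memLp_const x')
  have hexpand := integral_norm_sub_smul_sq_s7 (𝓕.le k) hdist_L2
    ((hx_meas k).sub stronglyMeasurable_const).aestronglyMeasurable (hg_L2 k) a
  have hdrift : ∫ ω, ⟪condExp (𝓕 k) ℙ (g k) ω, x k ω - x'⟫ ∂ℙ
      = ∫ ω, ⟪gradient f (x k ω), x k ω - x'⟫ ∂ℙ :=
    integral_congr_ae (by filter_upwards [hg_mean k] with ω hω; rw [hω])
  simp only [hxrec, hconst, sub_right_comm _ (a • _) x', hexpand, hdrift]
  linarith [mul_le_mul_of_nonneg_left (hsecond_moment k) (sq_nonneg a)]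

/-- Theorem 3 (first assertion) of the paper in the Euclidean/Hilbert setting
(`ζ(κ,c) = 1`, so `C = 1/2`): for RSGD with constant step size `α > 0` and
`E[‖∇f(x_k)‖²] ≤ G²`, for every `x ∈ H`,
`liminf_{k→∞} V_k(x) ≤ (σ²/b + G²) · α/2`. -/
theorem rsgd_constant_step_vi_liminf
    {Ω : Type*} [MeasureSpace Ω] [IsProbabilityMeasure (ℙ : Measure Ω)]
    {H : Type*} [NormedAddCommGroup H] [InnerProductSpace ℝ H] [CompleteSpace H]
    (𝓕 : Filtration ℕ (inferInstance : MeasurableSpace Ω))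
    (f : H → ℝ) (hf : ContDiff ℝ 1 f)
    (x₀ : H) (α : ℕ → ℝ) (hα : ∀ k, 0 < α k)
    (b : ℕ) (hb : 1 ≤ b) (σ2 : ℝ) (hσ2 : 0 ≤ σ2)
    (g : ℕ → Ω → H)
    (hg_meas : ∀ k, StronglyMeasurable[𝓕 (k + 1)] (g k))
    (hg_L2 : ∀ k, MemLp (g k) 2 ℙ)
    (x : ℕ → Ω → H)
    (hx0 : x 0 = fun _ => x₀)
    (hxrec : ∀ k, x (k + 1) = fun ω => x k ω - α k • g k ω)
    (hx_meas : ∀ k, StronglyMeasurable[𝓕 k] (x k))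
    (hg_mean : ∀ k, condExp (𝓕 k) ℙ (g k) =ᵐ[ℙ] fun ω => gradient f (x k ω))
    (hg_var : ∀ k, ∀ᵐ ω ∂ℙ,
      condExp (𝓕 k) ℙ (fun ω' => ‖g k ω' - gradient f (x k ω')‖ ^ 2) ω ≤ σ2 / b)
    (hx_int : ∀ k, Integrable (fun ω => ‖x k ω‖ ^ 2) ℙ)
    (hgrad_int : ∀ k, Integrable (fun ω => ‖gradient f (x k ω)‖ ^ 2) ℙ)
    (a : ℝ) (ha : 0 < a) (hconst : ∀ k, α k = a)
    (G : ℝ) (hG : 0 < G)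
    (hGbound : ∀ k, (∫ ω, ‖gradient f (x k ω)‖ ^ 2 ∂ℙ) ≤ G ^ 2) :
    ∀ x' : H,
      liminf (fun k => ∫ ω, ⟪gradient f (x k ω), x k ω - x'⟫ ∂ℙ) atTop
        ≤ (σ2 / b + G ^ 2) * a / 2 :=
  rsgd_constant_step_vi_liminf_general 𝓕 f α b σ2 g hg_L2 x hxrec hx_meas hg_mean hg_var hx_int a ha
    hconst G hGbound
end

section
/- Let C₁, C₂, α, G, σ², ε be real constants with C₁, C₂, α, G, ε > 0, σ² ≥ 0 and ε > G²αC₁, and define K(b) := C₂ b / (εb − (σ² + G²b)αC₁) for real batch sizes b > σ²αC₁ / (ε − G²αC₁). Then on this interval K(b) > 0, K is monotone nonincreasing (its derivative satisfies dK/db = −C₁C₂ασ² / (εb − (σ² + G²b)αC₁)² ≤ 0), and K is convex. -/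
/-!
With `c = ε − G²αC₁ > 0` and `d = σ²αC₁ ≥ 0` the denominator is the affine function `c b − d`,
positive exactly on `b > d / c`, and `K(b) = C₂ b / (c b − d) = C₂ / c + (C₂ d / c) (c b − d)⁻¹`.
So `K` is a nonnegative multiple of the convex, decreasing function `x ↦ x⁻¹` composed with an
increasing affine map, plus a constant.
-/

open Set

section AffineQuotient

variable {p c d b : ℝ}

lemma sub_pos_of_mem_Ioi_div (hc : 0 < c) (hb : b ∈ Ioi (d / c)) : 0 < c * b - d := by
  have := (div_lt_iff₀ hc).mp hb
  linarith

lemma pos_of_mem_Ioi_div (hc : 0 < c) (hd : 0 ≤ d) (hb : b ∈ Ioi (d / c)) : 0 < b :=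
  (div_nonneg hd hc.le).trans_lt hb

lemma hasDerivAt_mul_div_affine (hb : c * b - d ≠ 0) :
    HasDerivAt (fun x => p * x / (c * x - d)) (-(p * d) / (c * b - d) ^ 2) b := by
  have hnum : HasDerivAt (fun x => p * x) p b := by
    simpa using (hasDerivAt_id b).const_mul p
  have hden : HasDerivAt (fun x => c * x - d) c b := by
    simpa using ((hasDerivAt_id b).const_mul c).sub_const d
  have h := hnum.div hden hb
  rwa [show p * (c * b - d) - p * b * c = -(p * d) by ring] at h

lemma mul_div_affine_eq (hc : c ≠ 0) (hb : c * b - d ≠ 0) :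
    p * b / (c * b - d) = p / c + p * d / c * (c * b - d)⁻¹ := by
  rw [← div_eq_mul_inv, div_div, div_add_div _ _ hc (mul_ne_zero hc hb),
    div_eq_div_iff hb (mul_ne_zero hc (mul_ne_zero hc hb))]
  ring

lemma convexOn_inv_affine (hc : 0 < c) : ConvexOn ℝ (Ioi (d / c)) fun b => (c * b - d)⁻¹ := by
  let A : ℝ →ᵃ[ℝ] ℝ := c • AffineMap.id ℝ ℝ - AffineMap.const ℝ ℝ d
  have hA : ∀ b, A b = c * b - d := fun b => by simp [A]
  have hpre : A ⁻¹' Ioi 0 = Ioi (d / c) := by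
    ext b
    simp only [mem_preimage, mem_Ioi, hA, div_lt_iff₀ hc, sub_pos, mul_comm b]
  have hinv : ConvexOn ℝ (Ioi 0) fun x : ℝ => x⁻¹ := by
    simpa using convexOn_zpow (𝕜 := ℝ) (-1)
  simpa [hpre, Function.comp_def, hA] using hinv.comp_affineMap A

lemma convexOn_mul_div_affine (hc : 0 < c) (hpd : 0 ≤ p * d) :
    ConvexOn ℝ (Ioi (d / c)) fun b => p * b / (c * b - d) := by
  have h := ((convexOn_inv_affine (d := d) hc).smul (div_nonneg hpd hc.le)).add_const (p / c)
  refine h.congr fun b hb => ?_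
  rw [Pi.add_apply, smul_eq_mul, mul_div_affine_eq hc.ne' (sub_pos_of_mem_Ioi_div hc hb).ne',
    add_comm]

lemma antitoneOn_mul_div_affine (hc : 0 < c) (hpd : 0 ≤ p * d) :
    AntitoneOn (fun b => p * b / (c * b - d)) (Ioi (d / c)) := by
  have hderiv : ∀ b ∈ Ioi (d / c),
      HasDerivAt (fun b => p * b / (c * b - d)) (-(p * d) / (c * b - d) ^ 2) b :=
    fun b hb => hasDerivAt_mul_div_affine (sub_pos_of_mem_Ioi_div hc hb).ne'
  refine antitoneOn_of_hasDerivWithinAt_nonpos (f' := fun b => -(p * d) / (c * b - d) ^ 2)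
    (convex_Ioi _) (fun b hb => (hderiv b hb).continuousAt.continuousWithinAt) (fun b hb => ?_) fun b _ => ?_
  · rw [interior_Ioi] at hb
    exact (hderiv b hb).hasDerivWithinAt
  · exact div_nonpos_of_nonpos_of_nonneg (neg_nonpos.mpr hpd) (sq_nonneg _)

end AffineQuotient

theorem steps_pos_antitone_convex_general
    (C₁ C₂ α G σ2 ε : ℝ) (hC₁ : 0 < C₁) (hC₂ : 0 < C₂) (hα : 0 < α)
    (hσ2 : 0 ≤ σ2) (hεG : G ^ 2 * α * C₁ < ε) :
    (∀ b ∈ Set.Ioi (σ2 * α * C₁ / (ε - G ^ 2 * α * C₁)),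
        0 < C₂ * b / (ε * b - (σ2 + G ^ 2 * b) * α * C₁)) ∧
    AntitoneOn (fun b => C₂ * b / (ε * b - (σ2 + G ^ 2 * b) * α * C₁))
      (Set.Ioi (σ2 * α * C₁ / (ε - G ^ 2 * α * C₁))) ∧
    (∀ b ∈ Set.Ioi (σ2 * α * C₁ / (ε - G ^ 2 * α * C₁)),
        HasDerivAt (fun b => C₂ * b / (ε * b - (σ2 + G ^ 2 * b) * α * C₁))
          (-(C₁ * C₂ * α * σ2) / (ε * b - (σ2 + G ^ 2 * b) * α * C₁) ^ 2) b ∧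
        -(C₁ * C₂ * α * σ2) / (ε * b - (σ2 + G ^ 2 * b) * α * C₁) ^ 2 ≤ 0) ∧
    ConvexOn ℝ (Set.Ioi (σ2 * α * C₁ / (ε - G ^ 2 * α * C₁)))
      (fun b => C₂ * b / (ε * b - (σ2 + G ^ 2 * b) * α * C₁)) := by
  have hden : ∀ b, ε * b - (σ2 + G ^ 2 * b) * α * C₁
      = (ε - G ^ 2 * α * C₁) * b - σ2 * α * C₁ := fun b => by ring
  have hnum : C₁ * C₂ * α * σ2 = C₂ * (σ2 * α * C₁) := by ring
  simp only [hden, hnum]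
  have hc : 0 < ε - G ^ 2 * α * C₁ := sub_pos.mpr hεG
  have hd : 0 ≤ σ2 * α * C₁ := by positivity
  have hpd : 0 ≤ C₂ * (σ2 * α * C₁) := by positivity
  refine ⟨fun b hb => ?_, antitoneOn_mul_div_affine hc hpd, fun b hb => ⟨?_, ?_⟩,
    convexOn_mul_div_affine hc hpd⟩
  · exact div_pos (mul_pos hC₂ (pos_of_mem_Ioi_div hc hd hb)) (sub_pos_of_mem_Ioi_div hc hb)
  · exact hasDerivAt_mul_div_affine (sub_pos_of_mem_Ioi_div hc hb).ne'
  · exact div_nonpos_of_nonpos_of_nonneg (neg_nonpos.mpr hpd) (sq_nonneg _)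

/-- Theorem 5 of the paper, constant step size `α_k = α`: on the interval
`b > σ²αC₁/(ε − G²αC₁)`, the number of steps
`K(b) = C₂ b / (εb − (σ² + G²b)αC₁)` needed for an ε-approximation is positive,
monotone nonincreasing (with derivative `−C₁C₂ασ²/(εb − (σ² + G²b)αC₁)² ≤ 0`),
and convex in the batch size `b`. -/
theorem steps_pos_antitone_convex
    (C₁ C₂ α G σ2 ε : ℝ) (hC₁ : 0 < C₁) (hC₂ : 0 < C₂) (hα : 0 < α)
    (hG : 0 < G) (hσ2 : 0 ≤ σ2) (hε : 0 < ε) (hεG : G ^ 2 * α * C₁ < ε) :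
    (∀ b ∈ Set.Ioi (σ2 * α * C₁ / (ε - G ^ 2 * α * C₁)),
        0 < C₂ * b / (ε * b - (σ2 + G ^ 2 * b) * α * C₁)) ∧
    AntitoneOn (fun b => C₂ * b / (ε * b - (σ2 + G ^ 2 * b) * α * C₁))
      (Set.Ioi (σ2 * α * C₁ / (ε - G ^ 2 * α * C₁))) ∧
    (∀ b ∈ Set.Ioi (σ2 * α * C₁ / (ε - G ^ 2 * α * C₁)),
        HasDerivAt (fun b => C₂ * b / (ε * b - (σ2 + G ^ 2 * b) * α * C₁))
          (-(C₁ * C₂ * α * σ2) / (ε * b - (σ2 + G ^ 2 * b) * α * C₁) ^ 2) b ∧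
        -(C₁ * C₂ * α * σ2) / (ε * b - (σ2 + G ^ 2 * b) * α * C₁) ^ 2 ≤ 0) ∧
    ConvexOn ℝ (Set.Ioi (σ2 * α * C₁ / (ε - G ^ 2 * α * C₁)))
      (fun b => C₂ * b / (ε * b - (σ2 + G ^ 2 * b) * α * C₁)) :=
  steps_pos_antitone_convex_general C₁ C₂ α G σ2 ε hC₁ hC₂ hα hσ2 hεG
end

section
/- Let C₁, C₂, α, G, σ², ε be real constants with C₁, C₂, α, G, ε, σ² > 0 and ε > G²αC₁. Then the SFO complexity b ↦ K(b)·b = C₂ b² / (εb − (σ² + G²b)αC₁) is convex on the interval b > σ²αC₁ / (ε − G²αC₁) (its second derivative equals 2C₁²C₂α²σ⁴ / (εb − (σ² + G²b)αC₁)³ ≥ 0), and it attains its global minimum on this interval exactly at the critical batch size b⋆ = 2σ²αC₁ / (ε − G²αC₁). -/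
/-!
Writing `D = ε − G²αC₁ > 0` and `s = σ²αC₁ > 0`, the SFO complexity is
`f b = C₂ b² / (D b − s)` on `b > s / D`, where the denominator is positive. Two quotient rules
give `f'' b = 2 C₂ s² / (D b − s)³ ≥ 0`, hence convexity, and the identity
`f b − 4 C₂ s / D² = C₂ (D b − 2 s)² / (D² (D b − s))` shows that the minimum value
`4 C₂ s / D²` is attained exactly at `b = 2 s / D`.
-/

open Set

namespace SqDivAffine

variable {c D s b : ℝ}

theorem hasDerivAt (hb : D * b - s ≠ 0) :
    HasDerivAt (fun x => c * x ^ 2 / (D * x - s)) (c * (D * b ^ 2 - 2 * s * b) / (D * b - s) ^ 2)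
      b := by
  have hnum : HasDerivAt (fun x : ℝ => c * x ^ 2) (c * (2 * b)) b := by
    simpa using (hasDerivAt_pow 2 b).const_mul c
  have hden : HasDerivAt (fun x : ℝ => D * x - s) D b := by
    simpa using ((hasDerivAt_id b).const_mul D).sub_const s
  exact (hnum.div hden hb).congr_deriv (by ring)

theorem hasDerivAt_deriv (hb : D * b - s ≠ 0) :
    HasDerivAt (fun x => c * (D * x ^ 2 - 2 * s * x) / (D * x - s) ^ 2)
      (2 * c * s ^ 2 / (D * b - s) ^ 3) b := by
  have hnum : HasDerivAt (fun x : ℝ => c * (D * x ^ 2 - 2 * s * x)) (c * (D * (2 * b) - 2 * s))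
      b := by
    have := ((hasDerivAt_pow 2 b).const_mul D).sub ((hasDerivAt_id b).const_mul (2 * s))
    exact (this.congr_deriv (by simp)).const_mul c
  have hden : HasDerivAt (fun x : ℝ => (D * x - s) ^ 2) (2 * (D * b - s) * D) b := by
    have hlin : HasDerivAt (fun x : ℝ => D * x - s) D b := by
      simpa using ((hasDerivAt_id b).const_mul D).sub_const s
    exact (hlin.pow 2).congr_deriv (by ring)
  refine (hnum.div hden (pow_ne_zero 2 hb)).congr_deriv ?_
  field_simp
  ring

theorem deriv_deriv (hb : D * b - s ≠ 0) :
    deriv (deriv fun x => c * x ^ 2 / (D * x - s)) b = 2 * c * s ^ 2 / (D * b - s) ^ 3 := by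
  have hopen : IsOpen {x : ℝ | D * x - s ≠ 0} :=
    isOpen_ne_fun (by fun_prop) continuous_const
  have hderiv : deriv (fun x => c * x ^ 2 / (D * x - s)) =ᶠ[nhds b]
      fun x => c * (D * x ^ 2 - 2 * s * x) / (D * x - s) ^ 2 :=
    Filter.eventuallyEq_of_mem (hopen.mem_nhds hb) fun x hx => (hasDerivAt hx).deriv
  rw [hderiv.deriv_eq]
  exact (hasDerivAt_deriv hb).deriv

theorem denom_pos (hD : 0 < D) (hb : b ∈ Ioi (s / D)) : 0 < D * b - s := by
  have := (div_lt_iff₀ hD).mp hb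
  linarith

theorem convexOn (hc : 0 ≤ c) (hD : 0 < D) :
    ConvexOn ℝ (Ioi (s / D)) fun x => c * x ^ 2 / (D * x - s) := by
  have hpos (x : ℝ) (hx : x ∈ interior (Ioi (s / D))) : 0 < D * x - s :=
    denom_pos hD (interior_subset hx)
  refine convexOn_of_hasDerivWithinAt2_nonneg (convex_Ioi _)
    (fun x hx => (hasDerivAt (denom_pos hD hx).ne').continuousAt.continuousWithinAt)
    (fun x hx => (hasDerivAt (hpos x hx).ne').hasDerivWithinAt)
    (fun x hx => (hasDerivAt_deriv (hpos x hx).ne').hasDerivWithinAt) fun x hx => ?_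
  have := hpos x hx
  positivity

theorem sub_min_eq (hD : D ≠ 0) (hb : D * b - s ≠ 0) :
    c * b ^ 2 / (D * b - s) - 4 * c * s / D ^ 2 =
      c * (D * b - 2 * s) ^ 2 / (D ^ 2 * (D * b - s)) := by
  rw [div_sub_div _ _ hb (pow_ne_zero 2 hD), div_eq_div_iff (mul_ne_zero hb (pow_ne_zero 2 hD))
    (mul_ne_zero (pow_ne_zero 2 hD) hb)]
  ring

theorem apply_two_mul_div (hD : D ≠ 0) (hs : s ≠ 0) :
    c * (2 * s / D) ^ 2 / (D * (2 * s / D) - s) = 4 * c * s / D ^ 2 := by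
  have hden : D * (2 * s / D) - s = s := by field_simp; ring
  rw [hden]
  field_simp
  ring

theorem min_le (hc : 0 ≤ c) (hD : 0 < D) (hb : 0 < D * b - s) :
    4 * c * s / D ^ 2 ≤ c * b ^ 2 / (D * b - s) := by
  have := sub_min_eq (c := c) hD.ne' hb.ne'
  have : 0 ≤ c * (D * b - 2 * s) ^ 2 / (D ^ 2 * (D * b - s)) := by positivity
  linarith

theorem eq_two_mul_div_of_le_min (hc : 0 < c) (hD : 0 < D) (hb : 0 < D * b - s)
    (hle : c * b ^ 2 / (D * b - s) ≤ 4 * c * s / D ^ 2) : b = 2 * s / D := by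
  have hzero : c * (D * b - 2 * s) ^ 2 / (D ^ 2 * (D * b - s)) = 0 := by
    have := sub_min_eq (c := c) hD.ne' hb.ne'
    have : 0 ≤ c * (D * b - 2 * s) ^ 2 / (D ^ 2 * (D * b - s)) := by positivity
    linarith
  have : D * b - 2 * s = 0 := by simpa [hc.ne', hD.ne', hb.ne'] using hzero
  rw [eq_div_iff hD.ne']
  linarith

end SqDivAffine

theorem sfo_convex_min_at_critical_batch_size_general
    (C₁ C₂ α G σ2 ε : ℝ) (hC₁ : 0 < C₁) (hC₂ : 0 < C₂) (hα : 0 < α)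
    (hσ2 : 0 < σ2) (hεG : G ^ 2 * α * C₁ < ε) :
    ConvexOn ℝ (Set.Ioi (σ2 * α * C₁ / (ε - G ^ 2 * α * C₁)))
      (fun b => C₂ * b ^ 2 / (ε * b - (σ2 + G ^ 2 * b) * α * C₁)) ∧
    (∀ b ∈ Set.Ioi (σ2 * α * C₁ / (ε - G ^ 2 * α * C₁)),
        deriv (deriv (fun b => C₂ * b ^ 2 / (ε * b - (σ2 + G ^ 2 * b) * α * C₁))) b
          = 2 * C₁ ^ 2 * C₂ * α ^ 2 * σ2 ^ 2
            / (ε * b - (σ2 + G ^ 2 * b) * α * C₁) ^ 3 ∧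
        0 ≤ 2 * C₁ ^ 2 * C₂ * α ^ 2 * σ2 ^ 2
            / (ε * b - (σ2 + G ^ 2 * b) * α * C₁) ^ 3) ∧
    2 * σ2 * α * C₁ / (ε - G ^ 2 * α * C₁)
      ∈ Set.Ioi (σ2 * α * C₁ / (ε - G ^ 2 * α * C₁)) ∧
    (∀ b ∈ Set.Ioi (σ2 * α * C₁ / (ε - G ^ 2 * α * C₁)),
        C₂ * (2 * σ2 * α * C₁ / (ε - G ^ 2 * α * C₁)) ^ 2
          / (ε * (2 * σ2 * α * C₁ / (ε - G ^ 2 * α * C₁))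
              - (σ2 + G ^ 2 * (2 * σ2 * α * C₁ / (ε - G ^ 2 * α * C₁))) * α * C₁)
        ≤ C₂ * b ^ 2 / (ε * b - (σ2 + G ^ 2 * b) * α * C₁)) ∧
    (∀ b ∈ Set.Ioi (σ2 * α * C₁ / (ε - G ^ 2 * α * C₁)),
        (∀ b' ∈ Set.Ioi (σ2 * α * C₁ / (ε - G ^ 2 * α * C₁)),
            C₂ * b ^ 2 / (ε * b - (σ2 + G ^ 2 * b) * α * C₁)
              ≤ C₂ * b' ^ 2 / (ε * b' - (σ2 + G ^ 2 * b') * α * C₁)) →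
        b = 2 * σ2 * α * C₁ / (ε - G ^ 2 * α * C₁)) := by
  set D := ε - G ^ 2 * α * C₁
  set s := σ2 * α * C₁
  have hD : 0 < D := sub_pos.mpr hεG
  have hs : 0 < s := by positivity
  have hdenom (b : ℝ) : ε * b - (σ2 + G ^ 2 * b) * α * C₁ = D * b - s := by ring
  have htwo_s : 2 * σ2 * α * C₁ = 2 * s := by ring
  have hcoeff : 2 * C₁ ^ 2 * C₂ * α ^ 2 * σ2 ^ 2 = 2 * C₂ * s ^ 2 := by ring
  simp only [hdenom, htwo_s, hcoeff, SqDivAffine.apply_two_mul_div hD.ne' hs.ne']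
  have hstar : 2 * s / D ∈ Ioi (s / D) := div_lt_div_of_pos_right (by linarith) hD
  refine ⟨SqDivAffine.convexOn hC₂.le hD, fun b hb => ?_, hstar,
    fun b hb => SqDivAffine.min_le hC₂.le hD (SqDivAffine.denom_pos hD hb), fun b hb hmin => ?_⟩
  · have := SqDivAffine.denom_pos hD hb
    exact ⟨SqDivAffine.deriv_deriv this.ne', by positivity⟩
  · have hle := hmin _ hstar
    rw [SqDivAffine.apply_two_mul_div hD.ne' hs.ne'] at hle
    exact SqDivAffine.eq_two_mul_div_of_le_min hC₂ hD (SqDivAffine.denom_pos hD hb) hle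

/-- Theorem 5 of the paper, constant step size `α_k = α`: the SFO complexity
`K(b)·b = C₂ b² / (εb − (σ² + G²b)αC₁)` is convex on `b > σ²αC₁/(ε − G²αC₁)`
(its second derivative equals `2C₁²C₂α²σ⁴/(εb − (σ² + G²b)αC₁)³ ≥ 0`), and it
attains its global minimum on this interval exactly at the critical batch size
`b⋆ = 2σ²αC₁/(ε − G²αC₁)`. -/
theorem sfo_convex_min_at_critical_batch_size
    (C₁ C₂ α G σ2 ε : ℝ) (hC₁ : 0 < C₁) (hC₂ : 0 < C₂) (hα : 0 < α)
    (hG : 0 < G) (hσ2 : 0 < σ2) (hε : 0 < ε) (hεG : G ^ 2 * α * C₁ < ε) :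
    ConvexOn ℝ (Set.Ioi (σ2 * α * C₁ / (ε - G ^ 2 * α * C₁)))
      (fun b => C₂ * b ^ 2 / (ε * b - (σ2 + G ^ 2 * b) * α * C₁)) ∧
    (∀ b ∈ Set.Ioi (σ2 * α * C₁ / (ε - G ^ 2 * α * C₁)),
        deriv (deriv (fun b => C₂ * b ^ 2 / (ε * b - (σ2 + G ^ 2 * b) * α * C₁))) b
          = 2 * C₁ ^ 2 * C₂ * α ^ 2 * σ2 ^ 2
            / (ε * b - (σ2 + G ^ 2 * b) * α * C₁) ^ 3 ∧
        0 ≤ 2 * C₁ ^ 2 * C₂ * α ^ 2 * σ2 ^ 2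
            / (ε * b - (σ2 + G ^ 2 * b) * α * C₁) ^ 3) ∧
    2 * σ2 * α * C₁ / (ε - G ^ 2 * α * C₁)
      ∈ Set.Ioi (σ2 * α * C₁ / (ε - G ^ 2 * α * C₁)) ∧
    (∀ b ∈ Set.Ioi (σ2 * α * C₁ / (ε - G ^ 2 * α * C₁)),
        C₂ * (2 * σ2 * α * C₁ / (ε - G ^ 2 * α * C₁)) ^ 2
          / (ε * (2 * σ2 * α * C₁ / (ε - G ^ 2 * α * C₁))
              - (σ2 + G ^ 2 * (2 * σ2 * α * C₁ / (ε - G ^ 2 * α * C₁))) * α * C₁)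
        ≤ C₂ * b ^ 2 / (ε * b - (σ2 + G ^ 2 * b) * α * C₁)) ∧
    (∀ b ∈ Set.Ioi (σ2 * α * C₁ / (ε - G ^ 2 * α * C₁)),
        (∀ b' ∈ Set.Ioi (σ2 * α * C₁ / (ε - G ^ 2 * α * C₁)),
            C₂ * b ^ 2 / (ε * b - (σ2 + G ^ 2 * b) * α * C₁)
              ≤ C₂ * b' ^ 2 / (ε * b' - (σ2 + G ^ 2 * b') * α * C₁)) →
        b = 2 * σ2 * α * C₁ / (ε - G ^ 2 * α * C₁)) :=
  sfo_convex_min_at_critical_batch_size_general C₁ C₂ α G σ2 ε hC₁ hC₂ hα hσ2 hεG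
end
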